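/- If f : ℝ³ → ℂ satisfies ‖x f‖_{L²} < ∞ and ‖|x|² f‖_{L²} < ∞, then ‖f‖_{L¹(ℝ³)} ≲ ‖x f‖_{L²}^{1/2} ‖|x|² f‖_{L²}^{1/2}, with an absolute implicit constant. -/

import Mathlib

/-!
Split space at a radius `R`. On the ball `|x| < R` write `f = |x|⁻¹ · (|x| f)` and on its
complement `f = |x|⁻² · (|x|² f)`; Cauchy–Schwarz bounds the two pieces of `‖f‖₁` by
`‖|x|⁻¹‖_{L²(|x|<R)} ‖x f‖₂` and `‖|x|⁻²‖_{L²(|x|≥R)} ‖|x|² f‖₂`. By dilation these weight norms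
are `R^{1/2}` and `R^{-1/2}` times their values at `R = 1`, which are finite in dimension three
since `|x|⁻²` is integrable near the origin and `|x|⁻⁴` near infinity. The radius
`R = ‖|x|² f‖₂ / ‖x f‖₂` balances the two terms.
-/

open MeasureTheory Metric Set Module
open scoped ENNReal Pointwise

theorem ENNReal.div_rpow_half_mul {A B : ℝ≥0∞} (hA₀ : A ≠ 0) (hA : A ≠ ⊤) :
    (B / A) ^ (1 / 2 : ℝ) * A = A ^ (1 / 2 : ℝ) * B ^ (1 / 2 : ℝ) := by
  have hsq : A ^ (1 / 2 : ℝ) * A ^ (1 / 2 : ℝ) = A := by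
    rw [← ENNReal.rpow_add _ _ hA₀ hA]; norm_num
  have hroot₀ : A ^ (1 / 2 : ℝ) ≠ 0 := by simp [hA₀, hA]
  have hroot : A ^ (1 / 2 : ℝ) ≠ ⊤ := by simp [hA₀, hA]
  have hcancel : (A ^ (1 / 2 : ℝ))⁻¹ * A = A ^ (1 / 2 : ℝ) := by
    nth_rw 2 [← hsq]
    exact ENNReal.inv_mul_cancel_left hroot₀ hroot
  rw [ENNReal.div_rpow_of_nonneg _ _ (by norm_num), div_eq_mul_inv, mul_assoc, hcancel, mul_comm]

theorem ENNReal.le_mul_geom_mean_of_forall_pos {X K₁ K₂ A B : ℝ≥0∞} (hA₀ : A ≠ 0) (hA : A ≠ ⊤)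
    (hB₀ : B ≠ 0) (hB : B ≠ ⊤)
    (hX : ∀ R : ℝ, 0 < R →
      X ≤ ENNReal.ofReal R ^ (1 / 2 : ℝ) * K₁ * A + ENNReal.ofReal R ^ (-(1 / 2) : ℝ) * K₂ * B) :
    X ≤ (K₁ + K₂) * A ^ (1 / 2 : ℝ) * B ^ (1 / 2 : ℝ) := by
  have hBA : B / A ≠ ⊤ := ENNReal.div_ne_top hB hA₀
  have hR : ENNReal.ofReal (B / A).toReal = B / A := ENNReal.ofReal_toReal hBA
  have hinv : (B / A) ^ (-(1 / 2) : ℝ) = (A / B) ^ (1 / 2 : ℝ) := by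
    rw [ENNReal.rpow_neg, ← ENNReal.inv_rpow, ENNReal.inv_div (.inl hA) (.inl hA₀)]
  calc X ≤ (B / A) ^ (1 / 2 : ℝ) * K₁ * A + (A / B) ^ (1 / 2 : ℝ) * K₂ * B := by
        simpa only [hR, hinv] using hX _ (ENNReal.toReal_pos (by simp [hB₀, hA]) hBA)
    _ = (K₁ + K₂) * A ^ (1 / 2 : ℝ) * B ^ (1 / 2 : ℝ) := by
        rw [mul_right_comm, ENNReal.div_rpow_half_mul hA₀ hA, mul_right_comm _ K₂,
          ENNReal.div_rpow_half_mul hB₀ hB]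
        ring

theorem eLpNorm_restrict_le_eLpNorm_inv_mul_eLpNorm_smul {α F : Type*} [MeasurableSpace α]
    [NormedAddCommGroup F] [NormedSpace ℝ F] {μ : Measure α} {s : Set α} {p q r : ℝ≥0∞}
    [p.HolderTriple q r] {w : α → ℝ} {f : α → F} (hw : AEStronglyMeasurable w μ)
    (hf : AEStronglyMeasurable f μ) (hws : ∀ᵐ x ∂μ.restrict s, w x ≠ 0) :
    eLpNorm f r (μ.restrict s) ≤
      eLpNorm (fun x => (w x)⁻¹) p (μ.restrict s) * eLpNorm (fun x => w x • f x) q μ := by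
  have hfactor : f =ᵐ[μ.restrict s] (fun x => (w x)⁻¹) • fun x => w x • f x := by
    filter_upwards [hws] with x hx
    simp [smul_smul, inv_mul_cancel₀ hx]
  calc eLpNorm f r (μ.restrict s)
      = eLpNorm ((fun x => (w x)⁻¹) • fun x => w x • f x) r (μ.restrict s) :=
        eLpNorm_congr_ae hfactor
    _ ≤ eLpNorm (fun x => (w x)⁻¹) p (μ.restrict s) *
          eLpNorm (fun x => w x • f x) q (μ.restrict s) :=
        eLpNorm_smul_le_mul_eLpNorm (hw.smul hf).restrict
          hw.aemeasurable.inv.aestronglyMeasurable.restrict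
    _ ≤ _ := by gcongr; exact Measure.restrict_le_self

theorem ae_eq_zero_of_eLpNorm_norm_pow_smul_eq_zero {E F : Type*} [NormedAddCommGroup E]
    [MeasurableSpace E] [OpensMeasurableSpace E] [NormedAddCommGroup F] [NormedSpace ℝ F]
    {μ : Measure E} [NullSingletonClass μ] {p : ℝ≥0∞} (hp : p ≠ 0) {m : ℕ} {f : E → F}
    (hf : AEStronglyMeasurable f μ) (h : eLpNorm (fun x => ‖x‖ ^ m • f x) p μ = 0) :
    f =ᵐ[μ] 0 := by
  have hzero := (eLpNorm_eq_zero_iff (by fun_prop) hp).1 h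
  filter_upwards [hzero, measure_singleton (μ := μ) 0 |> compl_mem_ae_iff.2] with x hx hx0
  exact (smul_eq_zero.1 hx).resolve_left (pow_ne_zero _ (norm_ne_zero_iff.2 hx0))

section HaarWeights
variable {E : Type*} [NormedAddCommGroup E] [NormedSpace ℝ E] [FiniteDimensional ℝ E]
  [MeasurableSpace E] [BorelSpace E] (μ : Measure E) [μ.IsAddHaarMeasure]

theorem MeasureTheory.Measure.restrict_smul_set {r : ℝ} (hr : r ≠ 0) (s : Set E) :
    μ.restrict (r • s) = ENNReal.ofReal |r ^ finrank ℝ E| • (μ.restrict s).map (r • ·) := by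
  ext t ht
  rw [Measure.smul_apply, Measure.map_apply (measurable_const_smul r) ht,
    Measure.restrict_apply ht, Measure.restrict_apply (measurable_const_smul r ht),
    preimage_smul₀ hr, smul_eq_mul, ← Measure.addHaar_smul, smul_set_inter₀ hr,
    smul_inv_smul₀ hr]

theorem eLpNorm_inv_norm_pow_restrict_smul_set {p : ℝ≥0∞} (hp : p ≠ ⊤) {r : ℝ} (hr : 0 < r)
    (m : ℕ) (s : Set E) :
    eLpNorm (fun x : E => (‖x‖ ^ m)⁻¹) p (μ.restrict (r • s)) =
      ENNReal.ofReal r ^ ((finrank ℝ E : ℝ) / p.toReal - m) *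
        eLpNorm (fun x : E => (‖x‖ ^ m)⁻¹) p (μ.restrict s) := by
  have hdil : (fun x : E => (‖x‖ ^ m)⁻¹) ∘ (r • ·) = (r ^ m)⁻¹ • fun x : E => (‖x‖ ^ m)⁻¹ := by
    ext x
    simp [norm_smul, abs_of_pos hr, mul_pow, mul_comm]
  rw [μ.restrict_smul_set hr.ne', eLpNorm_smul_measure_of_ne_top hp,
    eLpNorm_map_measure (by fun_prop) (measurable_const_smul r).aemeasurable, hdil,
    eLpNorm_const_smul, smul_eq_mul, ← mul_assoc]
  congr 1
  have hr₀ : ENNReal.ofReal r ≠ 0 := by simpa using hr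
  rw [abs_of_pos (by positivity), ENNReal.ofReal_pow hr.le, Real.enorm_of_nonneg (by positivity),
    ENNReal.ofReal_inv_of_pos (by positivity), ENNReal.ofReal_pow hr.le, ← ENNReal.rpow_natCast,
    ← ENNReal.rpow_mul, ← ENNReal.rpow_natCast, ← ENNReal.rpow_neg,
    ← ENNReal.rpow_add _ _ hr₀ ENNReal.ofReal_ne_top, one_div, ENNReal.toReal_inv]
  ring_nf

theorem eLpNorm_inv_norm_pow_restrict_ball_lt_top {m : ℕ} (hm : 2 * m < finrank ℝ E) :
    eLpNorm (fun x : E => (‖x‖ ^ m)⁻¹) 2 (μ.restrict (ball 0 1)) < ⊤ := by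
  have hmeas : AEStronglyMeasurable (fun x : E => (‖x‖ ^ m)⁻¹) (μ.restrict (ball 0 1)) := by
    fun_prop
  refine ((memLp_two_iff_integrable_sq hmeas).2 ?_).eLpNorm_lt_top
  refine integrableOn_ball_of_norm_le_rpow (C := 1) (α := 2 * m) (by omega) (by exact_mod_cast hm)
    (.of_forall fun x => ?_) (by fun_prop)
  rw [one_mul, Real.rpow_neg (norm_nonneg x), ← inv_pow, ← pow_mul, norm_pow, norm_inv, norm_norm,
    inv_pow, mul_comm]
  exact_mod_cast le_rfl

theorem eLpNorm_inv_norm_pow_restrict_compl_ball_lt_top {m : ℕ} (hm : finrank ℝ E < 2 * m) :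
    eLpNorm (fun x : E => (‖x‖ ^ m)⁻¹) 2 (μ.restrict (ball 0 1)ᶜ) < ⊤ := by
  have hmeas : AEStronglyMeasurable (fun x : E => (‖x‖ ^ m)⁻¹) (μ.restrict (ball 0 1)ᶜ) := by
    fun_prop
  refine ((memLp_two_iff_integrable_sq hmeas).2 ?_).eLpNorm_lt_top
  have hint := ((integrable_rpow_neg_one_add_norm_sq (μ := μ) (r := 2 * m)
    (by exact_mod_cast hm)).const_mul (2 ^ m)).integrableOn (s := (ball 0 1)ᶜ)
  refine hint.mono' (by fun_prop) ((ae_restrict_iff' measurableSet_ball.compl).2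
    (.of_forall fun x hx => ?_))
  have hx : 1 ≤ ‖x‖ := by simpa using hx
  have hexp : -(2 * m : ℝ) / 2 = -(m : ℕ) := by ring
  rw [hexp, Real.rpow_neg (by positivity), Real.rpow_natCast, norm_pow, norm_inv, norm_pow,
    norm_norm, ← inv_pow, ← inv_pow, ← pow_mul, pow_mul', ← mul_pow]
  refine pow_le_pow_left₀ (by positivity) ?_ m
  rw [inv_pow, ← div_eq_mul_inv, inv_le_iff_one_le_mul₀ (by positivity), div_mul_eq_mul_div,
    one_le_div₀ (by positivity)]
  nlinarith

theorem eLpNorm_one_restrict_smul_set_le [Nontrivial E] {F : Type*} [NormedAddCommGroup F]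
    [NormedSpace ℝ F] {f : E → F} (hf : AEStronglyMeasurable f μ) {R : ℝ} (hR : 0 < R) (m : ℕ)
    (s : Set E) :
    eLpNorm f 1 (μ.restrict (R • s)) ≤
      ENNReal.ofReal R ^ ((finrank ℝ E : ℝ) / 2 - m) *
        eLpNorm (fun x : E => (‖x‖ ^ m)⁻¹) 2 (μ.restrict s) *
          eLpNorm (fun x => ‖x‖ ^ m • f x) 2 μ := by
  have hnonzero : ∀ᵐ x ∂μ.restrict (R • s), ‖x‖ ^ m ≠ 0 := by
    refine ae_restrict_of_ae ?_
    filter_upwards [measure_singleton (μ := μ) 0 |> compl_mem_ae_iff.2] with x hx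
    exact pow_ne_zero _ (norm_ne_zero_iff.2 hx)
  calc eLpNorm f 1 (μ.restrict (R • s))
      ≤ eLpNorm (fun x : E => (‖x‖ ^ m)⁻¹) 2 (μ.restrict (R • s)) *
          eLpNorm (fun x => ‖x‖ ^ m • f x) 2 μ :=
        eLpNorm_restrict_le_eLpNorm_inv_mul_eLpNorm_smul (by fun_prop) hf hnonzero
    _ = _ := by
        rw [eLpNorm_inv_norm_pow_restrict_smul_set μ (by simp) hR, ENNReal.toReal_ofNat]

theorem eLpNorm_one_le_of_radius [Nontrivial E] {F : Type*} [NormedAddCommGroup F]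
    [NormedSpace ℝ F] {f : E → F} (hf : AEStronglyMeasurable f μ) {R : ℝ} (hR : 0 < R) :
    eLpNorm f 1 μ ≤
      ENNReal.ofReal R ^ ((finrank ℝ E : ℝ) / 2 - 1) *
          eLpNorm (fun x : E => (‖x‖ ^ 1)⁻¹) 2 (μ.restrict (ball 0 1)) *
            eLpNorm (fun x => ‖x‖ • f x) 2 μ +
        ENNReal.ofReal R ^ ((finrank ℝ E : ℝ) / 2 - 2) *
          eLpNorm (fun x : E => (‖x‖ ^ 2)⁻¹) 2 (μ.restrict (ball 0 1)ᶜ) *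
            eLpNorm (fun x => ‖x‖ ^ 2 • f x) 2 μ := by
  have hball : R • ball (0 : E) 1 = ball 0 R := smul_unitBall_of_pos hR
  have hcompl : R • (ball (0 : E) 1)ᶜ = (ball 0 R)ᶜ := by
    ext x
    simp only [← hball, mem_compl_iff, mem_smul_set_iff_inv_smul_mem₀ hR.ne']
  calc eLpNorm f 1 μ
      = eLpNorm f 1 (μ.restrict (R • ball 0 1)) + eLpNorm f 1 (μ.restrict (R • (ball 0 1)ᶜ)) := by
        rw [hball, hcompl, ← eLpNorm_one_add_measure,
          Measure.restrict_add_restrict_compl measurableSet_ball]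
    _ ≤ _ := by
        gcongr
        · simpa only [pow_one, Nat.cast_one] using
            eLpNorm_one_restrict_smul_set_le μ hf hR 1 (ball 0 1)
        · exact eLpNorm_one_restrict_smul_set_le μ hf hR 2 _

end HaarWeights

/-- if `f : ℝ³ → ℂ` satisfies `‖x f‖_{L²} < ∞` and `‖|x|² f‖_{L²} < ∞`, then
`‖f‖_{L¹(ℝ³)} ≲ ‖x f‖_{L²}^{1/2} ‖|x|² f‖_{L²}^{1/2}` with an absolute implicit constant. -/
theorem L1_interpolation_weights :
    ∃ C : ℝ≥0∞, C ≠ ⊤ ∧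
      ∀ f : EuclideanSpace ℝ (Fin 3) → ℂ, Measurable f →
        eLpNorm (fun x => ‖x‖ • f x) 2 volume < ⊤ →
        eLpNorm (fun x => ‖x‖ ^ 2 • f x) 2 volume < ⊤ →
        eLpNorm f 1 volume ≤
          C * (eLpNorm (fun x => ‖x‖ • f x) 2 volume) ^ ((1 : ℝ) / 2) *
            (eLpNorm (fun x => ‖x‖ ^ 2 • f x) 2 volume) ^ ((1 : ℝ) / 2) := by
  have hK₁ := eLpNorm_inv_norm_pow_restrict_ball_lt_top
    (volume : Measure (EuclideanSpace ℝ (Fin 3))) (m := 1) (by simp)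
  have hK₂ := eLpNorm_inv_norm_pow_restrict_compl_ball_lt_top
    (volume : Measure (EuclideanSpace ℝ (Fin 3))) (m := 2) (by simp)
  refine ⟨_, ENNReal.add_ne_top.2 ⟨hK₁.ne, hK₂.ne⟩, fun f hf hA hB => ?_⟩
  by_cases hAB : eLpNorm (fun x => ‖x‖ • f x) 2 volume = 0 ∨
      eLpNorm (fun x => ‖x‖ ^ 2 • f x) 2 volume = 0
  · have hf₀ : f =ᵐ[volume] 0 := by
      rcases hAB with h | h
      · exact ae_eq_zero_of_eLpNorm_norm_pow_smul_eq_zero two_ne_zero hf.aestronglyMeasurable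
          (m := 1) (by simpa only [pow_one] using h)
      · exact ae_eq_zero_of_eLpNorm_norm_pow_smul_eq_zero two_ne_zero hf.aestronglyMeasurable h
    simp [eLpNorm_congr_ae hf₀]
  obtain ⟨hA₀, hB₀⟩ := not_or.1 hAB
  refine ENNReal.le_mul_geom_mean_of_forall_pos hA₀ hA.ne hB₀ hB.ne fun R hR => ?_
  have hsplit := eLpNorm_one_le_of_radius volume hf.aestronglyMeasurable hR
  rwa [finrank_euclideanSpace_fin, show ((3 : ℕ) : ℝ) / 2 - 1 = 1 / 2 by norm_num,
    show ((3 : ℕ) : ℝ) / 2 - 2 = -(1 / 2) by norm_num] at hsplit
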